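/- arXiv:1507.01559 — 2 statements merged into one kernel-verified Lean document; each statement's English description precedes it below -/
import Mathlib

section
/- Let $Z_1, \dots, Z_n$ be independent real-valued random variables with $\mathbb{E}[Z_i] = 0$ and $\mathbb{E}[|Z_i|^p] < \infty$ for some $p \in [1,2]$. Then $\mathbb{E}\left[\left|\sum_{i=1}^n Z_i\right|^p\right] \le 2^p \sum_{i=1}^n \mathbb{E}[|Z_i|^p]$. -/
/-!
For `1 ≤ p ≤ 2` one has the pointwise inequality
`|a + b| ^ p ≤ |a| ^ p + p * sign a * |a| ^ (p - 1) * b + 2 * |b| ^ p`,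
which after scaling is the one-variable inequality `|1 + t| ^ p ≤ 1 + p * t + 2 * |t| ^ p`,
proved by monotonicity on the ranges `t ≥ 0`, `-1 ≤ t ≤ 0` and `t ≤ -1`.
Taking `a` to be a partial sum and `b` the next, independent and centred, summand, the middle
term has expectation `E[p * sign a * |a| ^ (p - 1)] * E[b] = 0`, so each summand adds at most
`2 * E|b| ^ p`. By induction `E|∑ Z_i| ^ p ≤ 2 * ∑ E|Z_i| ^ p ≤ 2 ^ p * ∑ E|Z_i| ^ p`.
-/

open MeasureTheory ProbabilityTheory

lemma monotoneOn_of_hasDerivAt_nonneg {D : Set ℝ} (hD : Convex ℝ D) {f f' : ℝ → ℝ}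
    (hf : ∀ x, HasDerivAt f (f' x) x) (hf' : ∀ x ∈ interior D, 0 ≤ f' x) : MonotoneOn f D :=
  monotoneOn_of_hasDerivWithinAt_nonneg hD
    (fun x _ ↦ (hf x).continuousAt.continuousWithinAt) (fun x _ ↦ (hf x).hasDerivWithinAt) hf'

lemma one_add_rpow_le {p : ℝ} (hp1 : 1 ≤ p) (hp2 : p ≤ 2) {t : ℝ} (ht : 0 ≤ t) :
    (1 + t) ^ p ≤ 1 + p * t + t ^ p := by
  let f : ℝ → ℝ := fun t ↦ 1 + p * t + t ^ p - (1 + t) ^ p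
  have hf : ∀ t, HasDerivAt f (p + p * t ^ (p - 1) - p * (1 + t) ^ (p - 1)) t := fun t ↦ by
    have h := (((hasDerivAt_id t).const_mul p).const_add 1).add
      ((hasDerivAt_id t).rpow_const (Or.inr hp1)) |>.sub
      (((hasDerivAt_id t).const_add 1).rpow_const (Or.inr hp1))
    exact h.congr_deriv (by simp only [id]; ring)
  have hf' : ∀ x ∈ interior (Set.Ici (0 : ℝ)),
      0 ≤ p + p * x ^ (p - 1) - p * (1 + x) ^ (p - 1) := by
    intro x hx
    rw [interior_Ici, Set.mem_Ioi] at hx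
    have hsub :=
      Real.rpow_add_le_add_rpow zero_le_one hx.le (by linarith) (by linarith : p - 1 ≤ 1)
    rw [Real.one_rpow] at hsub
    nlinarith
  have hmono := monotoneOn_of_hasDerivAt_nonneg (convex_Ici 0) hf hf' Set.self_mem_Ici ht ht
  simp only [f, mul_zero, add_zero, Real.zero_rpow (by linarith : p ≠ 0), Real.one_rpow,
    sub_self] at hmono
  linarith

lemma one_sub_rpow_add_le {p : ℝ} (hp1 : 1 ≤ p) (hp2 : p ≤ 2) {s : ℝ} (hs0 : 0 ≤ s)
    (hs1 : s ≤ 1) : (1 - s) ^ p + p * s ≤ 1 + 2 * s ^ p := by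
  let f : ℝ → ℝ := fun s ↦ 1 + 2 * s ^ p - p * s - (1 - s) ^ p
  have hf : ∀ s, HasDerivAt f (p * (2 * s ^ (p - 1) - 1 + (1 - s) ^ (p - 1))) s := fun s ↦ by
    have h := ((((hasDerivAt_id s).rpow_const (Or.inr hp1)).const_mul 2).const_add 1).sub
      ((hasDerivAt_id s).const_mul p) |>.sub
      (((hasDerivAt_id s).const_sub 1).rpow_const (Or.inr hp1))
    exact h.congr_deriv (by simp only [id]; ring)
  have hf' : ∀ x ∈ interior (Set.Icc (0 : ℝ) 1),
      0 ≤ p * (2 * x ^ (p - 1) - 1 + (1 - x) ^ (p - 1)) := by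
    intro x hx
    rw [interior_Icc, Set.mem_Ioo] at hx
    have hsub := Real.rpow_add_le_add_rpow hx.1.le (sub_nonneg.2 hx.2.le) (by linarith)
      (by linarith : p - 1 ≤ 1)
    rw [add_sub_cancel, Real.one_rpow] at hsub
    have hx_pow := Real.rpow_nonneg hx.1.le (p - 1)
    apply mul_nonneg <;> linarith
  have hmono := monotoneOn_of_hasDerivAt_nonneg (convex_Icc 0 1) hf hf'
    (Set.left_mem_Icc.2 zero_le_one) ⟨hs0, hs1⟩ hs0
  simp only [f, mul_zero, sub_zero, Real.zero_rpow (by linarith : p ≠ 0), Real.one_rpow] at hmono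
  linarith

lemma abs_one_add_rpow_le {p : ℝ} (hp1 : 1 ≤ p) (hp2 : p ≤ 2) (t : ℝ) :
    |1 + t| ^ p ≤ 1 + p * t + 2 * |t| ^ p := by
  rcases le_total 0 t with ht | ht
  · rw [abs_of_nonneg (by linarith), abs_of_nonneg ht]
    linarith [one_add_rpow_le hp1 hp2 ht, Real.rpow_nonneg ht p]
  rcases le_total (-1) t with ht1 | ht1
  · rw [abs_of_nonneg (by linarith), abs_of_nonpos ht]
    have h := one_sub_rpow_add_le hp1 hp2 (neg_nonneg.2 ht) (by linarith)
    rw [sub_neg_eq_add] at h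
    linarith
  · rw [abs_of_nonpos (by linarith), abs_of_nonpos ht]
    have hshift : (-(1 + t)) ^ p ≤ (-t) ^ p :=
      Real.rpow_le_rpow (by linarith) (by linarith) (by linarith)
    have hbernoulli := one_add_mul_self_le_rpow_one_add (by linarith : -1 ≤ -t - 1) hp1
    rw [add_sub_cancel] at hbernoulli
    linarith

/-- `|a| ^ p / a` is `sign a * |a| ^ (p - 1)`, the derivative of `|·| ^ p / p` at `a`; its junk
value `0` at `a = 0` is harmless here. -/
lemma abs_add_rpow_le {p : ℝ} (hp1 : 1 ≤ p) (hp2 : p ≤ 2) (a b : ℝ) :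
    |a + b| ^ p ≤ |a| ^ p + p * (|a| ^ p / a) * b + 2 * |b| ^ p := by
  rcases eq_or_ne a 0 with rfl | ha
  · simp only [zero_add, abs_zero, Real.zero_rpow (by linarith : p ≠ 0), div_zero, mul_zero,
      zero_mul]
    linarith [Real.rpow_nonneg (abs_nonneg b) p]
  have ha' : 0 < |a| := abs_pos.2 ha
  calc |a + b| ^ p = |a| ^ p * |1 + b / a| ^ p := by
        rw [← Real.mul_rpow ha'.le (abs_nonneg _), ← abs_mul, mul_add, mul_one,
          mul_div_cancel₀ _ ha]
    _ ≤ |a| ^ p * (1 + p * (b / a) + 2 * |b / a| ^ p) :=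
        mul_le_mul_of_nonneg_left (abs_one_add_rpow_le hp1 hp2 _) (Real.rpow_nonneg ha'.le p)
    _ = |a| ^ p + p * (|a| ^ p / a) * b + 2 * |b| ^ p := by
        rw [abs_div, Real.div_rpow (abs_nonneg b) ha'.le]
        field_simp

lemma abs_abs_rpow_div_self_le {p : ℝ} (hp1 : 1 ≤ p) (a : ℝ) :
    |(|a| ^ p / a)| ≤ 1 + |a| ^ p := by
  have hpow : 0 ≤ |a| ^ p := Real.rpow_nonneg (abs_nonneg a) p
  rw [abs_div, abs_of_nonneg hpow]
  rcases le_total |a| 1 with ha | ha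
  · have := div_le_one_of_le₀ (Real.rpow_le_self_of_le_one (abs_nonneg a) ha hp1) (abs_nonneg a)
    linarith
  · linarith [div_le_self hpow ha]

section Moments

variable {Ω : Type*} [MeasurableSpace Ω] {μ : Measure Ω}

lemma MeasureTheory.MemLp.integrable_abs_rpow [IsFiniteMeasure μ] {p : ℝ} (hp : 0 ≤ p)
    {X : Ω → ℝ} (hX : MemLp X (.ofReal p) μ) : Integrable (fun ω ↦ |X ω| ^ p) μ := by
  simpa [ENNReal.toReal_ofReal hp] using hX.integrable_norm_rpow'

lemma memLp_of_integrable_abs_rpow {p : ℝ} (hp : 0 < p) {X : Ω → ℝ}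
    (hXm : AEStronglyMeasurable X μ) (hX : Integrable (fun ω ↦ |X ω| ^ p) μ) :
    MemLp X (.ofReal p) μ :=
  (integrable_norm_rpow_iff hXm (by simpa using hp) ENNReal.ofReal_ne_top).1
    (by simpa [ENNReal.toReal_ofReal hp.le] using hX)

theorem integral_abs_add_rpow_le_of_indepFun [IsFiniteMeasure μ] {p : ℝ} (hp1 : 1 ≤ p)
    (hp2 : p ≤ 2) {X Y : Ω → ℝ} (hXY : IndepFun X Y μ) (hX : MemLp X (.ofReal p) μ)
    (hY : MemLp Y (.ofReal p) μ) (hY0 : ∫ ω, Y ω ∂μ = 0) :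
    ∫ ω, |X ω + Y ω| ^ p ∂μ ≤ ∫ ω, |X ω| ^ p ∂μ + 2 * ∫ ω, |Y ω| ^ p ∂μ := by
  let ψ : ℝ → ℝ := fun a ↦ p * (|a| ^ p / a)
  have hψ : Measurable ψ := by fun_prop
  have hXp := hX.integrable_abs_rpow (by linarith)
  have hYp := hY.integrable_abs_rpow (by linarith)
  have hψX : Integrable (fun ω ↦ ψ (X ω)) μ := by
    refine (((integrable_const 1).add hXp).const_mul p).mono'
      (hψ.comp_aemeasurable hX.aestronglyMeasurable.aemeasurable).aestronglyMeasurable ?_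
    refine .of_forall fun ω ↦ ?_
    rw [Real.norm_eq_abs, abs_mul, abs_of_nonneg (by linarith : 0 ≤ p)]
    exact mul_le_mul_of_nonneg_left (abs_abs_rpow_div_self_le hp1 _) (by linarith)
  have hψXY : Integrable (fun ω ↦ ψ (X ω) * Y ω) μ :=
    (hXY.comp hψ measurable_id).integrable_mul hψX (hY.integrable (by simpa using hp1))
  have hcross : ∫ ω, ψ (X ω) * Y ω ∂μ = 0 := by
    have hfactor := hXY.integral_fun_comp_mul_comp (f := ψ) (g := id)
      hX.aestronglyMeasurable.aemeasurable hY.aestronglyMeasurable.aemeasurable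
      hψ.aestronglyMeasurable measurable_id.aestronglyMeasurable
    simpa [hY0] using hfactor
  have hmain : Integrable (fun ω ↦ |X ω| ^ p + ψ (X ω) * Y ω) μ := hXp.add hψXY
  calc ∫ ω, |X ω + Y ω| ^ p ∂μ
      ≤ ∫ ω, (|X ω| ^ p + ψ (X ω) * Y ω + 2 * |Y ω| ^ p) ∂μ := by
        refine integral_mono ((hX.add hY).integrable_abs_rpow (by linarith))
          (hmain.add (hYp.const_mul 2)) fun ω ↦ ?_
        simpa only [ψ, mul_assoc] using abs_add_rpow_le hp1 hp2 (X ω) (Y ω)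
    _ = ∫ ω, |X ω| ^ p ∂μ + 2 * ∫ ω, |Y ω| ^ p ∂μ := by
        rw [integral_add hmain (hYp.const_mul 2), integral_add hXp hψXY, hcross,
          integral_const_mul, add_zero]

theorem integral_abs_sum_rpow_le_of_iIndepFun [IsFiniteMeasure μ] {ι : Type*} {p : ℝ}
    (hp1 : 1 ≤ p) (hp2 : p ≤ 2) {Z : ι → Ω → ℝ} (hmeas : ∀ i, Measurable (Z i))
    (hindep : iIndepFun Z μ) (hZ : ∀ i, MemLp (Z i) (.ofReal p) μ)
    (hmean : ∀ i, ∫ ω, Z i ω ∂μ = 0) (s : Finset ι) :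
    ∫ ω, |∑ i ∈ s, Z i ω| ^ p ∂μ ≤ 2 * ∑ i ∈ s, ∫ ω, |Z i ω| ^ p ∂μ := by
  classical
  induction s using Finset.induction_on with
  | empty => simp [Real.zero_rpow (by linarith : p ≠ 0)]
  | insert i s hi ih =>
    have hindep_i := hindep.indepFun_finsetSum_of_notMem hmeas hi
    rw [Finset.sum_fn] at hindep_i
    have hstep := integral_abs_add_rpow_le_of_indepFun hp1 hp2 hindep_i
      (memLp_finsetSum s fun j _ ↦ hZ j) (hZ i) (hmean i)
    simp only [Finset.sum_insert hi, add_comm (Z i _)]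
    linarith

end Moments

theorem stmt_4_general {Ω : Type*} [MeasurableSpace Ω] (μ : Measure Ω) [IsProbabilityMeasure μ]
    (n : ℕ) (Z : Fin n → Ω → ℝ) (hmeas : ∀ i, Measurable (Z i))
    (hindep : ProbabilityTheory.iIndepFun Z μ)
    (p : ℝ) (hp1 : 1 ≤ p) (hp2 : p ≤ 2)
    (hmean : ∀ i, ∫ ω, Z i ω ∂μ = 0)
    (hmom : ∀ i, Integrable (fun ω => |Z i ω| ^ p) μ) :
    ∫ ω, |∑ i, Z i ω| ^ p ∂μ ≤ (2 : ℝ) ^ p * ∑ i, ∫ ω, |Z i ω| ^ p ∂μ := by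
  have hZ i := memLp_of_integrable_abs_rpow (by linarith) (hmeas i).aestronglyMeasurable (hmom i)
  have h2p : (2 : ℝ) ≤ 2 ^ p := by
    simpa using Real.rpow_le_rpow_of_exponent_le one_le_two hp1
  have hmom_nonneg : 0 ≤ ∑ i, ∫ ω, |Z i ω| ^ p ∂μ :=
    Finset.sum_nonneg fun i _ ↦ integral_nonneg fun ω ↦ Real.rpow_nonneg (abs_nonneg _) p
  calc ∫ ω, |∑ i, Z i ω| ^ p ∂μ ≤ 2 * ∑ i, ∫ ω, |Z i ω| ^ p ∂μ :=
        integral_abs_sum_rpow_le_of_iIndepFun hp1 hp2 hmeas hindep hZ hmean Finset.univ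
    _ ≤ 2 ^ p * ∑ i, ∫ ω, |Z i ω| ^ p ∂μ := mul_le_mul_of_nonneg_right h2p hmom_nonneg

/-- von Bahr–Esseen / Biggins inequality: for independent centered random variables
with finite `p`-th moments, `p ∈ [1,2]`, `E|∑ Z_i|^p ≤ 2^p ∑ E|Z_i|^p`. -/
theorem stmt_4 {Ω : Type*} [MeasurableSpace Ω] (μ : Measure Ω) [IsProbabilityMeasure μ]
    (n : ℕ) (Z : Fin n → Ω → ℝ) (hmeas : ∀ i, Measurable (Z i))
    (hindep : ProbabilityTheory.iIndepFun Z μ)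
    (p : ℝ) (hp1 : 1 ≤ p) (hp2 : p ≤ 2)
    (hZint : ∀ i, Integrable (Z i) μ)
    (hmean : ∀ i, ∫ ω, Z i ω ∂μ = 0)
    (hmom : ∀ i, Integrable (fun ω => |Z i ω| ^ p) μ) :
    ∫ ω, |∑ i, Z i ω| ^ p ∂μ ≤ (2 : ℝ) ^ p * ∑ i, ∫ ω, |Z i ω| ^ p ∂μ :=
  stmt_4_general μ n Z hmeas hindep p hp1 hp2 hmean hmom
end

section
/- Let $(Z_s)_{s \ge 0}$ be a spectrally positive Lévy process with $\mathbb{E}[Z_1]=0$, $\mathbb{E}[Z_1^2] = \sigma^2 \in (0,\infty)$, and $\mathbb{E}[e^{\epsilon_0 |Z_1|}] < \infty$ for some $\epsilon_0 > 0$. There exists a constant $c_1 > 0$ such that for all $a \ge 0$ and all $t \ge 1$, $\mathbb{P}_a\left(\inf_{s \le t} Z_s \ge 0\right) \le c_1 (1+a)\, t^{-1/2}$. -/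
/-!
For `c ≥ 0` let `ψ(c) = log 𝔼 e^{-c Z₁} ≥ 0`; then `exp (-c Z_s - s ψ(c))` is a martingale. Stop it
at the first time `T ≤ n` at which `Z < -a`. Having no negative jumps, `Z` creeps through the level,
so `Z_T ≥ -a` and optional stopping gives `1 ≤ e^{ca} 𝔼 e^{-ψ(c) T}`; since `T = n` on the event
that `a + Z` stays nonnegative up to `t ≥ n`, this yields `(1 - e^{-n ψ(c)}) ℙ(event) ≤ c a`.
For `c = ε / √n` the expansion `e^{-cx} ≥ 1 - cx + c² min(x, 0)² / 2` gives
`e^{n ψ(c)} ≥ 1 + ε² 𝔼[min(Z₁, 0)²] / 2`, a constant `> 1` because `Z₁` is centred and not `0`,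
whence the bound `≲ a / √n`.

Optional stopping at `T` comes from the grids `ℕ / m`: the grid hitting times converge to `T`
from above by right-continuity, and the martingale with parameter `2c` bounds second moments,
which makes the stopped values uniformly integrable.
-/

open MeasureTheory Filter

/-- A spectrally positive Lévy process started at `0`: measurable in space, càdlàg paths with
left limits, stationary independent increments, and no negative jumps. -/
structure SpectrallyPositiveLevy {Ω : Type*} [MeasurableSpace Ω] (μ : Measure Ω)
    (Z : ℝ → Ω → ℝ) : Prop where
  meas : ∀ t, Measurable (Z t)
  start : ∀ ω, Z 0 ω = 0
  stationary : ∀ s t : ℝ, 0 ≤ s → 0 ≤ t →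
    Measure.map (fun ω => Z (s + t) ω - Z s ω) μ = Measure.map (fun ω => Z t ω) μ
  indep : ∀ (n : ℕ) (t : Fin (n + 1) → ℝ), Monotone t → (∀ i, 0 ≤ t i) →
    ProbabilityTheory.iIndepFun
      (fun i : Fin n => fun ω => Z (t i.succ) ω - Z (t i.castSucc) ω) μ
  cadlag : ∀ ω, ∀ t : ℝ, 0 ≤ t → ContinuousWithinAt (fun s => Z s ω) (Set.Ici t) t
  left_lim : ∀ ω, ∀ t : ℝ, 0 < t →
    ∃ l, Tendsto (fun s => Z s ω) (nhdsWithin t (Set.Iio t)) (nhds l)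
  no_neg_jump : ∀ ω, ∀ t : ℝ, 0 < t → ∀ l,
    Tendsto (fun s => Z s ω) (nhdsWithin t (Set.Iio t)) (nhds l) → l ≤ Z t ω

open ProbabilityTheory Real Set
open scoped Topology

section Analysis

variable {Ω : Type*} [MeasurableSpace Ω] {μ : Measure Ω}

lemma one_sub_mul_add_mul_min_sq_le_exp {c : ℝ} (hc : 0 ≤ c) (x : ℝ) :
    1 - c * x + c ^ 2 / 2 * min x 0 ^ 2 ≤ exp (-c * x) := by
  rcases le_total x 0 with hx | hx
  · have := quadratic_le_exp_of_nonneg (x := -c * x) (by nlinarith)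
    rw [min_eq_left hx]
    nlinarith
  · have := add_one_le_exp (-c * x)
    rw [min_eq_right hx]
    nlinarith

lemma integrable_exp_mul_of_abs_le_of_integrable_exp_abs {X : Ω → ℝ} {ε t : ℝ}
    (hX : AEStronglyMeasurable X μ) (hε : Integrable (fun ω => exp (ε * |X ω|)) μ)
    (ht : |t| ≤ ε) : Integrable (fun ω => exp (t * X ω)) μ := by
  refine hε.mono' (by fun_prop) (ae_of_all _ fun ω => ?_)
  rw [norm_of_nonneg (exp_nonneg _), exp_le_exp]
  calc t * X ω ≤ |t| * |X ω| := by rw [← abs_mul]; exact le_abs_self _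
    _ ≤ ε * |X ω| := by gcongr

lemma MeasureTheory.MemLp.integrable_min_zero_sq {X : Ω → ℝ} (hX : MemLp X 2 μ) :
    Integrable (fun ω => min (X ω) 0 ^ 2) μ := by
  have hX_meas := hX.1
  refine hX.integrable_sq.mono' (by fun_prop) (ae_of_all _ fun ω => ?_)
  rw [norm_of_nonneg (sq_nonneg _)]
  rcases le_total (X ω) 0 with h | h
  · rw [min_eq_left h]
  · simpa [min_eq_right h] using sq_nonneg (X ω)

variable [IsProbabilityMeasure μ] {X : Ω → ℝ}

lemma one_add_mul_integral_min_sq_le_mgf (hX : MemLp X 2 μ) (hmean : ∫ ω, X ω ∂μ = 0)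
    {c : ℝ} (hc : 0 ≤ c) (hexp : Integrable (fun ω => exp (-c * X ω)) μ) :
    1 + c ^ 2 / 2 * ∫ ω, min (X ω) 0 ^ 2 ∂μ ≤ mgf X μ (-c) := by
  have hX1 : Integrable X μ := hX.integrable one_le_two
  have hlin : Integrable (fun ω => 1 - c * X ω) μ := (integrable_const 1).sub (hX1.const_mul c)
  have hquad := hX.integrable_min_zero_sq.const_mul (c ^ 2 / 2)
  calc 1 + c ^ 2 / 2 * ∫ ω, min (X ω) 0 ^ 2 ∂μ
      = ∫ ω, (1 - c * X ω + c ^ 2 / 2 * min (X ω) 0 ^ 2) ∂μ := by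
        rw [integral_add hlin hquad, integral_sub (integrable_const 1) (hX1.const_mul c),
          integral_const_mul, integral_const_mul, hmean]
        simp
    _ ≤ mgf X μ (-c) :=
        integral_mono (hlin.add hquad) hexp (one_sub_mul_add_mul_min_sq_le_exp hc <| X ·)

lemma cgf_neg_nonneg (hX : MemLp X 2 μ) (hmean : ∫ ω, X ω ∂μ = 0) {c : ℝ} (hc : 0 ≤ c)
    (hexp : Integrable (fun ω => exp (-c * X ω)) μ) : 0 ≤ cgf X μ (-c) := by
  refine log_nonneg (le_trans ?_ (one_add_mul_integral_min_sq_le_mgf hX hmean hc hexp))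
  have : 0 ≤ ∫ ω, min (X ω) 0 ^ 2 ∂μ := integral_nonneg fun ω => sq_nonneg _
  nlinarith [sq_nonneg c]

lemma one_add_natCast_mul_le_exp_natCast_mul_cgf (hX : MemLp X 2 μ) (hmean : ∫ ω, X ω ∂μ = 0)
    {c : ℝ} (hc : 0 ≤ c) (hexp : Integrable (fun ω => exp (-c * X ω)) μ) (n : ℕ) :
    1 + n * (c ^ 2 / 2 * ∫ ω, min (X ω) 0 ^ 2 ∂μ) ≤ exp (n * cgf X μ (-c)) := by
  have hv : 0 ≤ c ^ 2 / 2 * ∫ ω, min (X ω) 0 ^ 2 ∂μ :=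
    mul_nonneg (by positivity) (integral_nonneg fun ω => sq_nonneg _)
  rw [exp_nat_mul, cgf, exp_log (mgf_pos hexp)]
  exact (one_add_mul_le_pow (by linarith) n).trans
    (pow_le_pow_left₀ (by linarith) (one_add_mul_integral_min_sq_le_mgf hX hmean hc hexp) n)

lemma integral_min_zero_sq_pos (hX : MemLp X 2 μ) (hmean : ∫ ω, X ω ∂μ = 0)
    (hvar : 0 < ∫ ω, X ω ^ 2 ∂μ) : 0 < ∫ ω, min (X ω) 0 ^ 2 ∂μ := by
  refine (integral_nonneg fun ω => sq_nonneg _).lt_of_ne fun h => hvar.ne' ?_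
  have hnonneg : 0 ≤ᵐ[μ] X := by
    filter_upwards [(integral_eq_zero_iff_of_nonneg (fun ω => sq_nonneg _)
      hX.integrable_min_zero_sq).mp h.symm] with ω hω
    simpa using hω
  have hzero := (integral_eq_zero_iff_of_nonneg_ae hnonneg (hX.integrable one_le_two)).mp hmean
  rw [integral_congr_ae (hzero.mono fun ω (hω : X ω = 0) => show X ω ^ 2 = 0 by simp [hω])]
  simp

lemma sub_min_le_sq_div {x b : ℝ} (hx : 0 ≤ x) (hb : 0 < b) : x - min x b ≤ x ^ 2 / b := by
  rw [le_div_iff₀ hb]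
  rcases le_total x b with h | h
  · rw [min_eq_left h, sub_self, zero_mul]; positivity
  · rw [min_eq_right h]; nlinarith

/-- Truncating at level `b` loses at most `K / b` of the mass, uniformly in `n`. -/
lemma le_integral_of_tendsto_of_integral_sq_le {f : ℕ → Ω → ℝ} {g : Ω → ℝ}
    (hf_nonneg : ∀ n ω, 0 ≤ f n ω) (hf : ∀ n, Integrable (f n) μ)
    (hf_sq : ∀ n, Integrable (fun ω => f n ω ^ 2) μ)
    (hlim : ∀ ω, Tendsto (fun n => f n ω) atTop (𝓝 (g ω))) (hg : Integrable g μ)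
    {a K : ℝ} (ha : ∀ n, a ≤ ∫ ω, f n ω ∂μ) (hK : ∀ n, ∫ ω, f n ω ^ 2 ∂μ ≤ K) :
    a ≤ ∫ ω, g ω ∂μ := by
  have htrunc : ∀ b > 0, a - K / b ≤ ∫ ω, g ω ∂μ := by
    intro b hb
    have hmin_int : ∀ n, Integrable (fun ω => min (f n ω) b) μ :=
      fun n => (hf n).inf (integrable_const b)
    have hmin_ge : ∀ n, a - K / b ≤ ∫ ω, min (f n ω) b ∂μ := by
      intro n
      have hsub : ∫ ω, f n ω ∂μ - ∫ ω, min (f n ω) b ∂μ ≤ K / b := by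
        rw [← integral_sub (hf n) (hmin_int n)]
        calc ∫ ω, (f n ω - min (f n ω) b) ∂μ ≤ ∫ ω, f n ω ^ 2 / b ∂μ :=
              integral_mono ((hf n).sub (hmin_int n)) ((hf_sq n).div_const b)
                fun ω => sub_min_le_sq_div (hf_nonneg n ω) hb
          _ ≤ K / b := by rw [integral_div]; gcongr; exact hK n
      linarith [ha n]
    have hdct : Tendsto (fun n => ∫ ω, min (f n ω) b ∂μ) atTop (𝓝 (∫ ω, min (g ω) b ∂μ)) :=
      tendsto_integral_of_dominated_convergence (fun _ => b) (fun n => (hmin_int n).1)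
        (integrable_const b)
        (fun n => ae_of_all _ fun ω => by
          rw [norm_of_nonneg (le_min (hf_nonneg n ω) hb.le)]; exact min_le_right _ _)
        (ae_of_all _ fun ω => (hlim ω).min tendsto_const_nhds)
    calc a - K / b ≤ ∫ ω, min (g ω) b ∂μ := ge_of_tendsto' hdct hmin_ge
      _ ≤ ∫ ω, g ω ∂μ := integral_mono (hg.inf (integrable_const b)) hg fun ω => min_le_left _ _
  have hlim_K : Tendsto (fun b : ℝ => a - K / b) atTop (𝓝 a) := by
    simpa using tendsto_const_nhds.sub (tendsto_const_nhds.div_atTop (tendsto_id (α := ℝ)))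
  exact le_of_tendsto hlim_K (eventually_gt_atTop 0 |>.mono htrunc)

end Analysis

section FirstPassage

variable {Ω : Type*} {Z : ℝ → Ω → ℝ} {a n : ℝ} {ω : Ω}

variable (Z) in
noncomputable def firstPassage (a n : ℝ) (ω : Ω) : ℝ :=
  sInf (insert n {s | 0 ≤ s ∧ Z s ω < -a})

lemma bddBelow_firstPassage_set (hn : 0 ≤ n) :
    BddBelow (insert n {s | 0 ≤ s ∧ Z s ω < -a}) :=
  ⟨0, by rintro s (rfl | ⟨hs, -⟩) <;> assumption⟩

lemma firstPassage_nonneg (hn : 0 ≤ n) : 0 ≤ firstPassage Z a n ω :=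
  le_csInf (insert_nonempty _ _) (by rintro s (rfl | ⟨hs, -⟩) <;> assumption)

lemma firstPassage_le (hn : 0 ≤ n) : firstPassage Z a n ω ≤ n :=
  csInf_le (bddBelow_firstPassage_set hn) (mem_insert _ _)

lemma firstPassage_le_of_lt (hn : 0 ≤ n) {s : ℝ} (hs : 0 ≤ s) (hcross : Z s ω < -a) :
    firstPassage Z a n ω ≤ s :=
  csInf_le (bddBelow_firstPassage_set hn) (mem_insert_of_mem _ ⟨hs, hcross⟩)

lemma neg_le_of_lt_firstPassage (hn : 0 ≤ n) {s : ℝ} (hs : 0 ≤ s)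
    (hlt : s < firstPassage Z a n ω) : -a ≤ Z s ω :=
  le_of_not_gt fun hcross => (firstPassage_le_of_lt hn hs hcross).not_gt hlt

lemma firstPassage_eq_of_forall {t : ℝ} (hn : 0 ≤ n) (hnt : n ≤ t)
    (h : ∀ s, 0 ≤ s → s ≤ t → 0 ≤ a + Z s ω) : firstPassage Z a n ω = n := by
  refine (firstPassage_le hn).antisymm (le_csInf (insert_nonempty _ _) ?_)
  rintro s (rfl | ⟨hs, hcross⟩)
  · rfl
  · by_contra! hsn
    linarith [h s hs (by linarith)]

end FirstPassage

section GridHit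

variable {Ω : Type*} {Z : ℝ → Ω → ℝ} {a : ℝ}

variable (Z) in
noncomputable def gridHit (a : ℝ) (m n : ℕ) : Ω → ℕ :=
  hittingBtwn (fun k ω => Z (k / m) ω) (Iio (-a)) 0 (n * m)

lemma gridHit_le (m n : ℕ) (ω : Ω) : gridHit Z a m n ω ≤ n * m :=
  hittingBtwn_le ω

lemma gridHit_div_le (m n : ℕ) (ω : Ω) : (gridHit Z a m n ω : ℝ) / m ≤ n := by
  rcases Nat.eq_zero_or_pos m with rfl | hm
  · simp
  rw [div_le_iff₀ (by positivity)]
  exact_mod_cast gridHit_le m n ω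

lemma firstPassage_le_gridHit_div {m : ℕ} (hm : 0 < m) (n : ℕ) (ω : Ω) :
    firstPassage Z a n ω ≤ (gridHit Z a m n ω : ℝ) / m := by
  by_cases hcross : ∃ j ∈ Icc 0 (n * m), Z (j / m) ω ∈ Iio (-a)
  · exact firstPassage_le_of_lt (Nat.cast_nonneg n) (by positivity)
      (hittingBtwn_mem_set (u := fun (k : ℕ) ω => Z (k / m) ω) hcross)
  · rw [gridHit, hittingBtwn, if_neg hcross]
    push_cast
    rw [mul_div_cancel_right₀ _ (by positivity)]
    exact firstPassage_le (Nat.cast_nonneg n)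

lemma gridHit_div_lt_add {m : ℕ} (hm : 0 < m) {n : ℕ} {ω : Ω} {s : ℝ} (hs : 0 ≤ s)
    (hsn : s ≤ n) (hcross : ∀ u ∈ Ico s (s + 1 / m), Z u ω < -a) :
    (gridHit Z a m n ω : ℝ) / m < s + 1 / m := by
  have hm' : (0 : ℝ) < m := by positivity
  set k := ⌈s * m⌉₊
  have hk_ge : s ≤ k / m := by rw [le_div_iff₀ hm']; exact Nat.le_ceil _
  have hk_lt : (k : ℝ) / m < s + 1 / m := by
    rw [div_lt_iff₀ hm', add_mul, one_div_mul_cancel hm'.ne']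
    exact Nat.ceil_lt_add_one (by positivity)
  have hk_le : k ≤ n * m := Nat.ceil_le.mpr (by push_cast; gcongr)
  have hhit : gridHit Z a m n ω ≤ k :=
    hittingBtwn_le_of_mem (Nat.zero_le k) hk_le (hcross _ ⟨hk_ge, hk_lt⟩)
  calc (gridHit Z a m n ω : ℝ) / m ≤ k / m := by gcongr
    _ < s + 1 / m := hk_lt

end GridHit

namespace SpectrallyPositiveLevy

variable {Ω : Type*} [MeasurableSpace Ω] {μ : Measure Ω} {Z : ℝ → Ω → ℝ}

lemma indepFun_sub_sub (hZ : SpectrallyPositiveLevy μ Z) {r s u : ℝ}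
    (hr : 0 ≤ r) (hrs : r ≤ s) (hsu : s ≤ u) :
    IndepFun (fun ω => Z s ω - Z r ω) (fun ω => Z u ω - Z s ω) μ := by
  have h := hZ.indep 2 ![r, s, u] (by
      intro i j hij
      fin_cases i <;> fin_cases j <;> simp_all [Fin.le_def]; all_goals linarith)
    (by intro i; fin_cases i <;> simp <;> linarith)
  exact h.indepFun (show (0 : Fin 2) ≠ 1 by decide)

lemma mgf_sub (hZ : SpectrallyPositiveLevy μ Z) {s u : ℝ} (hs : 0 ≤ s) (hu : 0 ≤ u) (t : ℝ) :
    mgf (fun ω => Z (s + u) ω - Z s ω) μ t = mgf (Z u) μ t := by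
  rw [← mgf_id_map (X := fun ω => Z (s + u) ω - Z s ω) ((hZ.meas _).sub (hZ.meas _)).aemeasurable,
    hZ.stationary s u hs hu,
    mgf_id_map (hZ.meas u).aemeasurable]

lemma mgf_add (hZ : SpectrallyPositiveLevy μ Z) {s u : ℝ} (hs : 0 ≤ s) (hu : 0 ≤ u) (t : ℝ) :
    mgf (Z (s + u)) μ t = mgf (Z s) μ t * mgf (Z u) μ t := by
  have hind := hZ.indepFun_sub_sub le_rfl hs (le_add_of_nonneg_right hu)
  simp only [hZ.start, sub_zero] at hind
  rw [← hZ.mgf_sub hs hu, ← hind.mgf_add' (hZ.meas s).aestronglyMeasurable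
    ((hZ.meas _).sub (hZ.meas _)).aestronglyMeasurable]
  congr 1
  ext ω
  simp

noncomputable def gridFiltration (hZ : SpectrallyPositiveLevy μ Z) (m : ℕ) :
    Filtration ℕ (inferInstance : MeasurableSpace Ω) :=
  Filtration.natural (fun k : ℕ => Z (k / m)) fun _ => (hZ.meas _).stronglyMeasurable

lemma stronglyAdapted_gridFiltration (hZ : SpectrallyPositiveLevy μ Z) (m : ℕ) :
    StronglyAdapted (hZ.gridFiltration m) (fun k : ℕ => Z (k / m)) :=
  Filtration.stronglyAdapted_natural _

lemma indep_gridFiltration (hZ : SpectrallyPositiveLevy μ Z) (m k : ℕ) :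
    Indep (MeasurableSpace.comap (fun ω => Z ((k + 1 : ℕ) / m) ω - Z (k / m) ω) inferInstance)
      (hZ.gridFiltration m k) μ := by
  set t : Fin (k + 2) → ℝ := fun i => (i : ℕ) / m
  set F : Fin (k + 1) → Ω → ℝ := fun i ω => Z (t i.succ) ω - Z (t i.castSucc) ω
  have hF : iIndepFun F μ :=
    hZ.indep (k + 1) t (fun i j hij => by simp only [t]; gcongr; exact hij) (fun i => by positivity)
  have hsplit := indep_iSup_of_disjoint
    (fun i => ((hZ.meas _).sub (hZ.meas _)).comap_le) hF.iIndep
    (Set.disjoint_singleton_left.mpr (fun h => h rfl) :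
      Disjoint {Fin.last k} {i : Fin (k + 1) | i ≠ Fin.last k})
  refine indep_of_indep_of_le_right (indep_of_indep_of_le_left hsplit ?_) ?_
  · refine le_trans (le_of_eq ?_) (le_biSup _ (Set.mem_singleton (Fin.last k)))
    congr 1
  · have hZ0 : Z ((0 : ℕ) / m) = fun _ => 0 := by ext ω; simp [hZ.start]
    have hZsucc : ∀ j (hj : j < k + 1), Z ((j + 1 : ℕ) / m) = Z (j / m) + F ⟨j, hj⟩ := by
      intro j hj
      ext ω
      simp [F, t]
    have hpast : ∀ j ≤ k, Measurable[⨆ i ∈ {i : Fin (k + 1) | i ≠ Fin.last k},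
        MeasurableSpace.comap (F i) inferInstance] (Z (j / m)) := by
      intro j hj
      induction j with
      | zero => rw [hZ0]; exact measurable_const
      | succ j ih =>
        rw [hZsucc j (by omega)]
        refine (ih (by omega)).add (Measurable.of_comap_le (le_biSup
          (fun i => MeasurableSpace.comap (F i) _) ?_))
        simp [Fin.ext_iff]
        omega
    exact iSup₂_le fun j hj => (hpast j hj).comap_le

variable (μ Z) in
noncomputable def expProcess (t s : ℝ) (ω : Ω) : ℝ :=
  exp (t * Z s ω - s * cgf (Z 1) μ t)

variable {t : ℝ}

lemma stronglyAdapted_expProcess (hZ : SpectrallyPositiveLevy μ Z) (m : ℕ) :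
    StronglyAdapted (hZ.gridFiltration m) (fun k : ℕ => expProcess μ Z t (k / m)) := fun k =>
  (by fun_prop : Continuous fun x => exp (t * x - k / m * cgf (Z 1) μ t)).comp_stronglyMeasurable
    (hZ.stronglyAdapted_gridFiltration m k)

lemma isStoppingTime_gridHit (hZ : SpectrallyPositiveLevy μ Z) (a : ℝ) (m n : ℕ) :
    IsStoppingTime (hZ.gridFiltration m) (fun ω => (gridHit Z a m n ω : WithTop ℕ)) :=
  (hZ.stronglyAdapted_gridFiltration m).adapted.isStoppingTime_hittingBtwn measurableSet_Iio

variable {a : ℝ}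

lemma neg_le_apply_firstPassage (hZ : SpectrallyPositiveLevy μ Z) (ha : 0 ≤ a) {n : ℝ}
    (hn : 0 ≤ n) (ω : Ω) : -a ≤ Z (firstPassage Z a n ω) ω := by
  rcases (firstPassage_nonneg (Z := Z) (a := a) (ω := ω) hn).eq_or_lt with h0 | hpos
  · rw [← h0, hZ.start]
    linarith
  obtain ⟨l, hl⟩ := hZ.left_lim ω _ hpos
  refine le_trans (ge_of_tendsto hl ?_) (hZ.no_neg_jump ω _ hpos l hl)
  filter_upwards [nhdsWithin_le_nhds (Ioi_mem_nhds hpos), self_mem_nhdsWithin] with s hs hlt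
  exact neg_le_of_lt_firstPassage hn (le_of_lt hs) hlt

lemma tendsto_gridHit_div (hZ : SpectrallyPositiveLevy μ Z) (n : ℕ) (ω : Ω) :
    Tendsto (fun m : ℕ => (gridHit Z a m n ω : ℝ) / m) atTop
      (𝓝[≥] firstPassage Z a n ω) := by
  have hlower : ∀ᶠ m : ℕ in atTop, firstPassage Z a n ω ≤ (gridHit Z a m n ω : ℝ) / m :=
    (eventually_gt_atTop 0).mono fun m hm => firstPassage_le_gridHit_div hm n ω
  refine tendsto_nhdsWithin_iff.mpr ⟨tendsto_order.mpr ⟨fun b hb => hlower.mono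
    fun m hm => hb.trans_le hm, fun b hb => ?_⟩, hlower⟩
  rcases (firstPassage_le (Nat.cast_nonneg n) (Z := Z) (a := a) (ω := ω)).eq_or_lt with heq | hlt
  · exact Eventually.of_forall fun m => (gridHit_div_le m n ω).trans_lt (heq ▸ hb)
  obtain ⟨s, hs_mem, hs_lt⟩ := exists_lt_of_csInf_lt (insert_nonempty _ _) (lt_min hb hlt)
  obtain ⟨hs, hs_cross⟩ : 0 ≤ s ∧ Z s ω < -a := by
    rcases hs_mem with rfl | h
    · exact absurd (hs_lt.trans_le (min_le_right _ _)) (lt_irrefl _)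
    · exact h
  obtain ⟨u, hsu, hu⟩ := mem_nhdsGE_iff_exists_Ico_subset.mp
    (hZ.cadlag ω s hs (isOpen_Iio.mem_nhds hs_cross))
  have hδ : 0 < min (u - s) (b - s) :=
    lt_min (by linarith [show s < u from hsu]) (by linarith [min_le_left b (n : ℝ)])
  filter_upwards [eventually_gt_atTop 0,
    tendsto_one_div_atTop_nhds_zero_nat.eventually (gt_mem_nhds hδ)] with m hm hmδ
  refine (gridHit_div_lt_add hm hs (hs_lt.le.trans (min_le_right _ _)) fun v hv => hu ?_).trans ?_
  · exact ⟨hv.1, hv.2.trans (by linarith [min_le_left (u - s) (b - s)])⟩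
  · linarith [min_le_right (u - s) (b - s)]

lemma tendsto_apply_gridHit_div (hZ : SpectrallyPositiveLevy μ Z) (n : ℕ) (ω : Ω) :
    Tendsto (fun m : ℕ => Z ((gridHit Z a m n ω : ℝ) / m) ω) atTop
      (𝓝 (Z (firstPassage Z a n ω) ω)) :=
  (hZ.cadlag ω _ (firstPassage_nonneg (Nat.cast_nonneg n))).tendsto.comp
    (hZ.tendsto_gridHit_div n ω)

lemma expProcess_pos (t s : ℝ) (ω : Ω) : 0 < expProcess μ Z t s ω := exp_pos _

lemma stoppedValue_gridHit (a : ℝ) (m n : ℕ) :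
    stoppedValue (fun k : ℕ => expProcess μ Z t (k / m)) (fun ω => (gridHit Z a m n ω : WithTop ℕ))
      = fun ω => expProcess μ Z t (gridHit Z a m n ω / m) ω :=
  rfl

lemma tendsto_expProcess_gridHit (hZ : SpectrallyPositiveLevy μ Z) (n : ℕ) (ω : Ω) :
    Tendsto (fun m : ℕ => expProcess μ Z t (gridHit Z a m n ω / m) ω) atTop
      (𝓝 (expProcess μ Z t (firstPassage Z a n ω) ω)) :=
  (((hZ.tendsto_apply_gridHit_div n ω).const_mul t).sub
    (((hZ.tendsto_gridHit_div n ω).mono_right nhdsWithin_le_nhds).mul_const _)).rexp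

lemma sq_expProcess_le {s n : ℝ} (hs : 0 ≤ s) (hsn : s ≤ n) (hψ : 0 ≤ cgf (Z 1) μ t)
    (hψ₂ : 0 ≤ cgf (Z 1) μ (2 * t)) (ω : Ω) :
    expProcess μ Z t s ω ^ 2 ≤ exp (n * cgf (Z 1) μ (2 * t)) * expProcess μ Z (2 * t) s ω := by
  rw [expProcess, expProcess, sq, ← exp_add, ← exp_add, exp_le_exp]
  nlinarith [mul_nonneg hs hψ, mul_nonneg (sub_nonneg.mpr hsn) hψ₂]

lemma expProcess_firstPassage_le (hZ : SpectrallyPositiveLevy μ Z) (ha : 0 ≤ a) (ht : t ≤ 0)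
    (hψ : 0 ≤ cgf (Z 1) μ t) {n : ℝ} (hn : 0 ≤ n) (ω : Ω) :
    expProcess μ Z t (firstPassage Z a n ω) ω ≤ exp (-t * a) := by
  have hZT : 0 ≤ Z (firstPassage Z a n ω) ω + a := by
    linarith [hZ.neg_le_apply_firstPassage ha hn ω]
  rw [expProcess, exp_le_exp]
  nlinarith [mul_nonneg (firstPassage_nonneg (Z := Z) (a := a) (ω := ω) hn) hψ,
    mul_nonneg (neg_nonneg.mpr ht) hZT]

variable [IsProbabilityMeasure μ]

lemma mgf_start (hZ : SpectrallyPositiveLevy μ Z) (t : ℝ) :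
    mgf (Z 0) μ t = 1 := by
  rw [show Z 0 = fun _ => 0 from funext hZ.start, mgf_const, mul_zero, exp_zero]

lemma mgf_natCast_mul (hZ : SpectrallyPositiveLevy μ Z) {h : ℝ}
    (hh : 0 ≤ h) (t : ℝ) (k : ℕ) : mgf (Z (k * h)) μ t = mgf (Z h) μ t ^ k := by
  induction k with
  | zero => simp [hZ.mgf_start]
  | succ k ih =>
    rw [Nat.cast_succ, add_one_mul, hZ.mgf_add (by positivity) hh, ih, pow_succ]

lemma mgf_div_natCast (hZ : SpectrallyPositiveLevy μ Z)
    (ht : Integrable (fun ω => exp (t * Z 1 ω)) μ) (k m : ℕ) :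
    mgf (Z (k / m)) μ t = exp (k / m * cgf (Z 1) μ t) := by
  rcases Nat.eq_zero_or_pos m with rfl | hm
  · simp [hZ.mgf_start]
  have hstep : mgf (Z (1 / m)) μ t = exp (1 / m * cgf (Z 1) μ t) := by
    have hpow : mgf (Z (1 / m)) μ t ^ m = exp (1 / m * cgf (Z 1) μ t) ^ m := by
      rw [← hZ.mgf_natCast_mul (by positivity), ← exp_nat_mul, ← mul_assoc,
        mul_one_div_cancel (by positivity), one_mul, cgf, exp_log (mgf_pos ht)]
    exact (pow_left_inj₀ (mgf_nonneg) (exp_nonneg _) hm.ne').mp hpow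
  rw [show (k : ℝ) / m = k * (1 / m) by ring, hZ.mgf_natCast_mul (by positivity), hstep,
    ← exp_nat_mul, mul_assoc]

lemma integrable_exp_mul_div_natCast (hZ : SpectrallyPositiveLevy μ Z)
    (ht : Integrable (fun ω => exp (t * Z 1 ω)) μ) (k m : ℕ) :
    Integrable (fun ω => exp (t * Z (k / m) ω)) μ :=
  mgf_pos_iff.mp (by rw [hZ.mgf_div_natCast ht]; positivity)

lemma integrable_expProcess (hZ : SpectrallyPositiveLevy μ Z)
    (ht : Integrable (fun ω => exp (t * Z 1 ω)) μ) (m k : ℕ) :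
    Integrable (expProcess μ Z t (k / m)) μ := by
  unfold expProcess
  simp_rw [exp_sub]
  exact (hZ.integrable_exp_mul_div_natCast ht k m).div_const _

lemma integral_expProcess (hZ : SpectrallyPositiveLevy μ Z)
    (ht : Integrable (fun ω => exp (t * Z 1 ω)) μ) (m k : ℕ) :
    ∫ ω, expProcess μ Z t (k / m) ω ∂μ = 1 := by
  unfold expProcess
  simp_rw [exp_sub]
  rw [integral_div, ← mgf, hZ.mgf_div_natCast ht, div_self (exp_pos _).ne']

lemma martingale_expProcess (hZ : SpectrallyPositiveLevy μ Z)
    (ht : Integrable (fun ω => exp (t * Z 1 ω)) μ) (m : ℕ) :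
    Martingale (fun k : ℕ => expProcess μ Z t (k / m)) (hZ.gridFiltration m) μ := by
  refine martingale_nat (hZ.stronglyAdapted_expProcess m)
    (hZ.integrable_expProcess ht m) fun k => ?_
  let inc : Ω → ℝ := fun ω => Z ((k + 1 : ℕ) / m) ω - Z (k / m) ω
  let D : Ω → ℝ := fun ω => exp (t * inc ω) * exp (-(1 / m * cgf (Z 1) μ t))
  have hsplit : expProcess μ Z t ((k + 1 : ℕ) / m) = expProcess μ Z t (k / m) * D := by
    ext ω
    simp only [expProcess, D, inc, Pi.mul_apply, ← exp_add]
    congr 1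
    push_cast
    ring
  have hinc_mgf : mgf inc μ t = exp (1 / m * cgf (Z 1) μ t) := by
    simp only [inc]
    rw [show (((k + 1 : ℕ) : ℝ) / m) = k / m + 1 / m by push_cast; ring,
      hZ.mgf_sub (by positivity) (by positivity)]
    simpa using hZ.mgf_div_natCast ht 1 m
  have hD_int : Integrable D μ :=
    (mgf_pos_iff.mp (hinc_mgf ▸ exp_pos _)).mul_const _
  have hD_mean : ∫ ω, D ω ∂μ = 1 := by
    rw [integral_mul_const, ← mgf, hinc_mgf, ← exp_add, add_neg_cancel, exp_zero]
  have hD_meas : StronglyMeasurable[MeasurableSpace.comap inc inferInstance] D :=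
    ((by fun_prop : Measurable fun x => exp (t * x) * exp (-(1 / m * cgf (Z 1) μ t))).comp
      (Measurable.of_comap_le le_rfl)).stronglyMeasurable
  have hD_cond : μ[D | hZ.gridFiltration m k] =ᵐ[μ] fun _ => 1 := by
    rw [← hD_mean]
    exact condExp_indep_eq ((hZ.meas _).sub (hZ.meas _)).comap_le ((hZ.gridFiltration m).le k)
      hD_meas (hZ.indep_gridFiltration m k)
  rw [hsplit]
  filter_upwards [condExp_mul_of_stronglyMeasurable_left (hZ.stronglyAdapted_expProcess m k)
    (hsplit ▸ hZ.integrable_expProcess ht m (k + 1)) hD_int, hD_cond] with ω h_pull h_indep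
  rw [h_pull, Pi.mul_apply, h_indep, mul_one]

lemma integrable_expProcess_gridHit (hZ : SpectrallyPositiveLevy μ Z)
    (ht : Integrable (fun ω => exp (t * Z 1 ω)) μ) (a : ℝ) (m n : ℕ) :
    Integrable (fun ω => expProcess μ Z t (gridHit Z a m n ω / m) ω) μ := by
  rw [← stoppedValue_gridHit]
  exact (hZ.martingale_expProcess ht m).submartingale.integrable_stoppedValue
    (hZ.isStoppingTime_gridHit a m n) fun ω => WithTop.coe_le_coe.mpr (gridHit_le m n ω)

lemma integral_expProcess_gridHit (hZ : SpectrallyPositiveLevy μ Z)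
    (ht : Integrable (fun ω => exp (t * Z 1 ω)) μ) (a : ℝ) (m n : ℕ) :
    ∫ ω, expProcess μ Z t (gridHit Z a m n ω / m) ω ∂μ = 1 := by
  have hstop := (hZ.martingale_expProcess ht m).stoppedValue_ae_eq_condExp_of_le_const
    (hZ.isStoppingTime_gridHit a m n) fun ω => WithTop.coe_le_coe.mpr (gridHit_le m n ω)
  rw [← stoppedValue_gridHit, integral_congr_ae hstop, integral_condExp, hZ.integral_expProcess ht]

lemma integrable_expProcess_firstPassage (hZ : SpectrallyPositiveLevy μ Z) (ha : 0 ≤ a)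
    (ht_neg : t ≤ 0) (ht : Integrable (fun ω => exp (t * Z 1 ω)) μ) (hψ : 0 ≤ cgf (Z 1) μ t)
    (n : ℕ) : Integrable (fun ω => expProcess μ Z t (firstPassage Z a n ω) ω) μ :=
  (integrable_const (exp (-t * a))).mono'
    (aestronglyMeasurable_of_tendsto_ae atTop
      (fun m => (hZ.integrable_expProcess_gridHit ht a m n).1)
      (ae_of_all _ (hZ.tendsto_expProcess_gridHit n)))
    (ae_of_all _ fun ω => by
      rw [norm_of_nonneg (expProcess_pos _ _ _).le]
      exact hZ.expProcess_firstPassage_le ha ht_neg hψ n.cast_nonneg ω)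

lemma one_le_integral_expProcess_firstPassage (hZ : SpectrallyPositiveLevy μ Z) (ha : 0 ≤ a)
    (ht_neg : t ≤ 0) (ht : Integrable (fun ω => exp (t * Z 1 ω)) μ)
    (ht₂ : Integrable (fun ω => exp (2 * t * Z 1 ω)) μ) (hψ : 0 ≤ cgf (Z 1) μ t)
    (hψ₂ : 0 ≤ cgf (Z 1) μ (2 * t)) (n : ℕ) :
    1 ≤ ∫ ω, expProcess μ Z t (firstPassage Z a n ω) ω ∂μ := by
  have hsq : ∀ m ω, expProcess μ Z t (gridHit Z a m n ω / m) ω ^ 2 ≤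
      exp (n * cgf (Z 1) μ (2 * t)) * expProcess μ Z (2 * t) (gridHit Z a m n ω / m) ω :=
    fun m ω => sq_expProcess_le (by positivity) (gridHit_div_le m n ω) hψ hψ₂ ω
  have hsq_int : ∀ m, Integrable (fun ω => exp (n * cgf (Z 1) μ (2 * t)) *
      expProcess μ Z (2 * t) (gridHit Z a m n ω / m) ω) μ :=
    fun m => (hZ.integrable_expProcess_gridHit ht₂ a m n).const_mul _
  refine le_integral_of_tendsto_of_integral_sq_le (K := exp (n * cgf (Z 1) μ (2 * t)))
    (fun m ω => (expProcess_pos _ _ _).le)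
    (hZ.integrable_expProcess_gridHit ht a · n)
    (fun m => (hsq_int m).mono' ((hZ.integrable_expProcess_gridHit ht a m n).1.pow 2)
      (ae_of_all _ fun ω => by rw [norm_of_nonneg (sq_nonneg _)]; exact hsq m ω))
    (hZ.tendsto_expProcess_gridHit n) (hZ.integrable_expProcess_firstPassage ha ht_neg ht hψ n)
    (fun m => (hZ.integral_expProcess_gridHit ht a m n).ge) fun m => ?_
  calc ∫ ω, expProcess μ Z t (gridHit Z a m n ω / m) ω ^ 2 ∂μ
      ≤ ∫ ω, exp (n * cgf (Z 1) μ (2 * t)) * expProcess μ Z (2 * t) (gridHit Z a m n ω / m) ω ∂μ :=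
        integral_mono_of_nonneg (ae_of_all _ fun ω => sq_nonneg _) (hsq_int m) (ae_of_all _ (hsq m))
    _ = exp (n * cgf (Z 1) μ (2 * t)) := by
        rw [integral_const_mul, hZ.integral_expProcess_gridHit ht₂, mul_one]

lemma measureReal_survival_le (hZ : SpectrallyPositiveLevy μ Z) (ha : 0 ≤ a) {c : ℝ} (hc : 0 ≤ c)
    (hc₁ : Integrable (fun ω => exp (-c * Z 1 ω)) μ)
    (hc₂ : Integrable (fun ω => exp (2 * -c * Z 1 ω)) μ) (hψ : 0 ≤ cgf (Z 1) μ (-c))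
    (hψ₂ : 0 ≤ cgf (Z 1) μ (2 * -c)) {n : ℕ} {t : ℝ} (hnt : n ≤ t) :
    (1 - exp (-(n * cgf (Z 1) μ (-c)))) * μ.real {ω | ∀ s, 0 ≤ s → s ≤ t → 0 ≤ a + Z s ω}
      ≤ c * a := by
  set ψ := cgf (Z 1) μ (-c)
  set g := fun ω => expProcess μ Z (-c) (firstPassage Z a n ω) ω
  obtain ⟨δ, hδ_def⟩ : ∃ δ, δ = exp (c * a) - exp (c * a - n * ψ) := ⟨_, rfl⟩
  have hg_int : Integrable g μ :=
    hZ.integrable_expProcess_firstPassage ha (by linarith) hc₁ hψ n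
  have hg_le : ∀ ω, g ω ≤ exp (c * a) := fun ω => by
    simpa using hZ.expProcess_firstPassage_le ha (by linarith) hψ n.cast_nonneg ω
  have hg_one : 1 ≤ ∫ ω, g ω ∂μ :=
    hZ.one_le_integral_expProcess_firstPassage ha (by linarith) hc₁ hc₂ hψ hψ₂ n
  have hδ : 0 ≤ δ := by
    rw [hδ_def, sub_nonneg, exp_le_exp]
    linarith [mul_nonneg n.cast_nonneg hψ]
  have hsurv : {ω | ∀ s, 0 ≤ s → s ≤ t → 0 ≤ a + Z s ω} ⊆ {ω | δ ≤ exp (c * a) - g ω} := by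
    intro ω hω
    have hT := firstPassage_eq_of_forall n.cast_nonneg hnt hω
    have hZn := hω n n.cast_nonneg hnt
    show δ ≤ exp (c * a) - expProcess μ Z (-c) (firstPassage Z a n ω) ω
    rw [hT, expProcess, hδ_def, sub_le_sub_iff_left, exp_le_exp]
    nlinarith
  have hmarkov := mul_meas_ge_le_integral_of_nonneg
    (ae_of_all _ fun ω => sub_nonneg.mpr (hg_le ω)) ((integrable_const _).sub hg_int) δ
  rw [integral_sub (integrable_const _) hg_int, integral_const, probReal_univ, one_smul] at hmarkov
  have hδE := (mul_le_mul_of_nonneg_left (measureReal_mono hsurv) hδ).trans hmarkov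
  calc (1 - exp (-(n * ψ))) * μ.real {ω | ∀ s, 0 ≤ s → s ≤ t → 0 ≤ a + Z s ω}
      = exp (-(c * a)) * (δ * μ.real {ω | ∀ s, 0 ≤ s → s ≤ t → 0 ≤ a + Z s ω}) := by
        rw [← mul_assoc, hδ_def, mul_sub, ← exp_add, ← exp_add, neg_add_cancel, exp_zero]
        ring_nf
    _ ≤ exp (-(c * a)) * (exp (c * a) - 1) := by gcongr; linarith
    _ = 1 - exp (-(c * a)) := by rw [mul_sub, ← exp_add, neg_add_cancel, exp_zero, mul_one]
    _ ≤ c * a := by linarith [add_one_le_exp (-(c * a))]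

lemma measureReal_survival_le_div_sqrt (hZ : SpectrallyPositiveLevy μ Z)
    (hX : MemLp (Z 1) 2 μ) (hmean : ∫ ω, Z 1 ω ∂μ = 0) {ε₀ ε : ℝ} (hε : 0 < ε)
    (hε₀ : 2 * ε ≤ ε₀) (hexp : Integrable (fun ω => exp (ε₀ * |Z 1 ω|)) μ) (ha : 0 ≤ a)
    {n : ℕ} (hn : 1 ≤ n) {t : ℝ} (hnt : n ≤ t) :
    (ε ^ 2 / 2 * ∫ ω, min (Z 1 ω) 0 ^ 2 ∂μ) / (1 + ε ^ 2 / 2 * ∫ ω, min (Z 1 ω) 0 ^ 2 ∂μ)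
      * μ.real {ω | ∀ s, 0 ≤ s → s ≤ t → 0 ≤ a + Z s ω} ≤ ε * a / √n := by
  set v := ∫ ω, min (Z 1 ω) 0 ^ 2 ∂μ
  set B := ε ^ 2 / 2 * v
  have hv : 0 ≤ v := integral_nonneg fun ω => sq_nonneg _
  have hsqrt : 1 ≤ √(n : ℝ) := one_le_sqrt.mpr (by exact_mod_cast hn)
  set c := ε / √n
  have hc : 0 ≤ c := by positivity
  have hcε : c ≤ ε := div_le_self hε.le hsqrt
  have hint : ∀ {u}, |u| ≤ ε₀ → Integrable (fun ω => exp (u * Z 1 ω)) μ := fun hu =>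
    integrable_exp_mul_of_abs_le_of_integrable_exp_abs (hZ.meas 1).aestronglyMeasurable hexp hu
  have hc₁ := hint (u := -c) (by rw [abs_neg, abs_of_nonneg hc]; linarith)
  have hc₂ := hint (u := 2 * -c) (by rw [abs_mul, abs_neg, abs_of_nonneg hc]; norm_num; linarith)
  have hψ := cgf_neg_nonneg hX hmean hc hc₁
  have hψ₂ : 0 ≤ cgf (Z 1) μ (2 * -c) := by
    rw [mul_neg] at hc₂ ⊢
    exact cgf_neg_nonneg hX hmean (by positivity) (by simpa only [neg_mul] using hc₂)
  have hgrowth : 1 + B ≤ exp (n * cgf (Z 1) μ (-c)) := by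
    have h := one_add_natCast_mul_le_exp_natCast_mul_cgf hX hmean hc hc₁ n
    rwa [div_pow, sq_sqrt n.cast_nonneg, ← mul_assoc, mul_div_assoc', mul_div_assoc',
      mul_div_cancel_left₀ _ (by positivity)] at h
  have hgap : B / (1 + B) ≤ 1 - exp (-(n * cgf (Z 1) μ (-c))) := by
    have hinv : exp (-(n * cgf (Z 1) μ (-c))) ≤ (1 + B)⁻¹ := by
      rw [exp_neg]
      exact inv_anti₀ (by positivity) hgrowth
    have hB : B / (1 + B) = 1 - (1 + B)⁻¹ := by
      have : 0 < 1 + B := by positivity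
      field_simp
      ring
    linarith
  calc B / (1 + B) * μ.real {ω | ∀ s, 0 ≤ s → s ≤ t → 0 ≤ a + Z s ω}
      ≤ (1 - exp (-(n * cgf (Z 1) μ (-c)))) * μ.real {ω | ∀ s, 0 ≤ s → s ≤ t → 0 ≤ a + Z s ω} := by
        gcongr
    _ ≤ c * a := hZ.measureReal_survival_le ha hc hc₁ hc₂ hψ hψ₂ hnt
    _ = ε * a / √n := by ring

end SpectrallyPositiveLevy

open SpectrallyPositiveLevy in
/-- ballot-type estimate `ℙ_a(inf_{s≤t} Z_s ≥ 0) ≤ c₁ (1+a) t^{-1/2}`. -/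
theorem stmt_10 {Ω : Type*} [MeasurableSpace Ω] (μ : Measure Ω) [IsProbabilityMeasure μ]
    (Z : ℝ → Ω → ℝ) (hZ : SpectrallyPositiveLevy μ Z)
    (σ2 : ℝ) (hσ : 0 < σ2)
    (hint : Integrable (fun ω => (Z 1 ω) ^ 2) μ)
    (hmean : ∫ ω, Z 1 ω ∂μ = 0) (hvar : ∫ ω, (Z 1 ω) ^ 2 ∂μ = σ2)
    (ε0 : ℝ) (hε0 : 0 < ε0)
    (hexp : Integrable (fun ω => Real.exp (ε0 * |Z 1 ω|)) μ) :
    ∃ c1 : ℝ, 0 < c1 ∧ ∀ a : ℝ, 0 ≤ a → ∀ t : ℝ, 1 ≤ t →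
      (μ {ω | ∀ s : ℝ, 0 ≤ s → s ≤ t → 0 ≤ a + Z s ω}).toReal
        ≤ c1 * (1 + a) / Real.sqrt t := by
  have hX : MemLp (Z 1) 2 μ :=
    (memLp_two_iff_integrable_sq (hZ.meas 1).aestronglyMeasurable).mpr hint
  set ε := ε0 / 2
  set B := ε ^ 2 / 2 * ∫ ω, min (Z 1 ω) 0 ^ 2 ∂μ
  have hB : 0 < B := by
    have := integral_min_zero_sq_pos hX hmean (hvar ▸ hσ)
    positivity
  refine ⟨(1 + B) / B * ε * √2, by positivity, fun a ha t ht => ?_⟩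
  set n := ⌊t⌋₊
  have hn : 1 ≤ n := Nat.one_le_floor_iff t |>.mpr ht
  have hnt : (n : ℝ) ≤ t := Nat.floor_le (by linarith)
  have hsqrt : √t ≤ √2 * √n := by
    rw [← sqrt_mul zero_le_two]
    exact sqrt_le_sqrt (by linarith [Nat.lt_floor_add_one t, (by exact_mod_cast hn : (1 : ℝ) ≤ n)])
  have hsurv : B / (1 + B) * μ.real {ω | ∀ s : ℝ, 0 ≤ s → s ≤ t → 0 ≤ a + Z s ω}
      ≤ ε * a / √n :=
    hZ.measureReal_survival_le_div_sqrt hX hmean (half_pos hε0) (by linarith) hexp ha hn hnt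
  rw [div_mul_eq_mul_div, div_le_iff₀ (by positivity)] at hsurv
  rw [← measureReal_def, le_div_iff₀ (by positivity)]
  calc μ.real {ω | ∀ s : ℝ, 0 ≤ s → s ≤ t → 0 ≤ a + Z s ω} * √t
      ≤ (1 + B) / B * (ε * a / √n) * (√2 * √n) := by
        gcongr
        rw [div_mul_eq_mul_div, le_div_iff₀ hB]
        linarith
    _ = (1 + B) / B * ε * √2 * a := by field_simp
    _ ≤ (1 + B) / B * ε * √2 * (1 + a) := by gcongr; linarith
end
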